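/- arXiv:1810.03326 — 2 statements merged into one kernel-verified Lean document; each statement's English description precedes it below -/
import Mathlib

section
/- Let {A_n}_n be a sequence of n×n complex matrices and f : D ⊂ ℝ^k → ℂ a measurable function on a set D with 0 < μ_k(D) < ∞. Assume {A_n}_n has asymptotic singular value distribution described by f, i.e. for every continuous compactly supported F: ℝ → ℂ, lim_{n→∞}(1/n)∑_{j=1}^n F(σ_j(A_n)) = (1/μ_k(D))∫_D F(|f(x)|)dx. Then {A_n}_n is sparsely vanishing (meaning lim_{M→∞} limsup_{n→∞} (1/n)·#{i ∈ {1,…,n} : σ_i(A_n) < 1/M} = 0) if and only if f is sparsely vanishing (meaning the Lebesgue measure of {x ∈ D : f(x) = 0} is zero). -/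
/-!
On `[0, ∞)` the indicator of `[0, 1/M)` lies between the continuous compactly supported cutoffs
`cutoff (2 * M)` and `cutoff M`, so the limsup of the proportion of singular values below `1/M`
is squeezed between the limits of their averages, which the distribution hypothesis identifies
as `μ(D)⁻¹ ∫_D cutoff (|f|)`. As `M → ∞` the cutoffs decrease to the indicator of `{0}`, so by
dominated convergence both bounds tend to `μ{x ∈ D | f x = 0} / μ(D)`, which vanishes exactly
when the zero set of `f` is null.
-/

open MeasureTheory Filter Matrix

/-- The singular values of a square complex matrix, defined as the nonnegative
square roots of the eigenvalues of `Aᴴ * A`. -/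
noncomputable def singularValues {n : ℕ} (A : Matrix (Fin n) (Fin n) ℂ) : Fin n → ℝ :=
  fun j => Real.sqrt ((Matrix.isHermitian_conjTranspose_mul_self A).eigenvalues j)

open Set Topology

namespace Filter

variable {ι : Type*} {l : Filter ι} [l.NeBot] {u v : ι → ℝ}

theorem limsup_le_of_le_of_tendsto {b : ℝ} (hu : IsBoundedUnder (· ≥ ·) l u) (huv : u ≤ v)
    (hv : Tendsto v l (𝓝 b)) : limsup u l ≤ b :=
  hv.limsup_eq ▸ limsup_le_limsup (.of_forall huv) hu.isCoboundedUnder_le hv.isBoundedUnder_le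

theorem le_limsup_of_le_of_tendsto {a : ℝ} (hv : IsBoundedUnder (· ≤ ·) l v) (huv : u ≤ v)
    (hu : Tendsto u l (𝓝 a)) : a ≤ limsup v l :=
  hu.limsup_eq ▸ limsup_le_limsup (.of_forall huv) hu.isCoboundedUnder_le hv

end Filter

noncomputable def cutoff (M : ℕ) (x : ℝ) : ℝ := max 0 (min 1 (2 - M * |x|))

namespace cutoff

theorem nonneg (M : ℕ) (x : ℝ) : 0 ≤ cutoff M x := le_max_left _ _

theorem le_one (M : ℕ) (x : ℝ) : cutoff M x ≤ 1 := max_le zero_le_one (min_le_left _ _)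

@[fun_prop]
theorem continuous (M : ℕ) : Continuous (cutoff M) := by unfold cutoff; fun_prop

theorem eq_one {M : ℕ} {x : ℝ} (h : M * |x| ≤ 1) : cutoff M x = 1 := by
  rw [cutoff, min_eq_left (by linarith), max_eq_right zero_le_one]

theorem eq_zero {M : ℕ} {x : ℝ} (h : 2 ≤ M * |x|) : cutoff M x = 0 :=
  max_eq_left (min_le_of_right_le (by linarith))

theorem hasCompactSupport {M : ℕ} (hM : M ≠ 0) : HasCompactSupport (cutoff M) := by
  refine HasCompactSupport.intro (isCompact_Icc (a := -2) (b := 2)) fun x hx ↦ eq_zero ?_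
  have hM : (1 : ℝ) ≤ M := by exact_mod_cast Nat.one_le_iff_ne_zero.2 hM
  have hx : 2 ≤ |x| := le_abs'.2 (by grind)
  nlinarith

theorem tendsto_indicator (x : ℝ) :
    Tendsto (fun M ↦ cutoff M x) atTop (𝓝 (({0} : Set ℝ).indicator 1 x)) := by
  rcases eq_or_ne x 0 with rfl | hx
  · simp [eq_one]
  · rw [indicator_of_notMem (notMem_singleton_iff.2 hx)]
    refine tendsto_const_nhds.congr' ?_
    have hlarge := (tendsto_natCast_atTop_atTop.atTop_mul_const
      (abs_pos.2 hx)).eventually_ge_atTop (2 : ℝ)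
    filter_upwards [hlarge] with M hM using (eq_zero hM).symm

theorem indicator_lt_le {M : ℕ} {x : ℝ} (hx : 0 ≤ x) :
    (if x < 1 / M then 1 else 0) ≤ cutoff M x := by
  split_ifs with h
  · refine (eq_one ?_).ge
    rw [abs_of_nonneg hx]
    rcases eq_or_ne M 0 with rfl | hM
    · simp
    · rw [lt_div_iff₀ (by positivity)] at h; linarith
  · exact nonneg M x

theorem two_mul_le_indicator_lt {M : ℕ} (hM : M ≠ 0) (x : ℝ) :
    cutoff (2 * M) x ≤ if x < 1 / M then 1 else 0 := by
  split_ifs with h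
  · exact le_one _ x
  · refine (eq_zero ?_).le
    rw [not_lt, div_le_iff₀ (by positivity)] at h
    push_cast
    nlinarith [le_abs_self x]

end cutoff

theorem tendsto_integral_cutoff {α : Type*} [MeasurableSpace α] (μ : Measure α) [IsFiniteMeasure μ]
    {g : α → ℝ} (hg : Measurable g) :
    Tendsto (fun M ↦ ∫ x, cutoff M (g x) ∂μ) atTop (𝓝 (μ.real (g ⁻¹' {0}))) := by
  rw [← integral_indicator_one (hg (measurableSet_singleton 0))]
  refine tendsto_integral_of_dominated_convergence (fun _ ↦ 1)
    (fun M ↦ ((cutoff.continuous M).measurable.comp hg).aestronglyMeasurable)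
    (integrable_const 1) (fun M ↦ .of_forall fun x ↦ ?_) (.of_forall fun x ↦ ?_)
  · rw [Real.norm_of_nonneg (cutoff.nonneg M _)]
    exact cutoff.le_one M _
  · convert cutoff.tendsto_indicator (g x) using 2
    exact indicator_comp_right (g := (1 : ℝ → ℝ)) g

noncomputable def proportionLt {n : ℕ} (s : Fin n → ℝ) (ε : ℝ) : ℝ :=
  ((Finset.univ.filter fun i ↦ s i < ε).card : ℝ) / n

section proportionLt

variable {n : ℕ} (s : Fin n → ℝ)

theorem proportionLt_nonneg (ε : ℝ) : 0 ≤ proportionLt s ε := by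
  unfold proportionLt; positivity

theorem proportionLt_le_one (ε : ℝ) : proportionLt s ε ≤ 1 := by
  refine div_le_one_of_le₀ ?_ n.cast_nonneg
  exact_mod_cast (Finset.card_filter_le _ _).trans_eq (Finset.card_fin n)

theorem proportionLt_le_average_cutoff (hs : ∀ i, 0 ≤ s i) (M : ℕ) :
    proportionLt s (1 / M) ≤ (n : ℝ)⁻¹ * ∑ i, cutoff M (s i) := by
  rw [proportionLt, div_eq_inv_mul, ← Finset.sum_boole]
  gcongr with i
  exact cutoff.indicator_lt_le (hs i)

theorem average_cutoff_two_mul_le_proportionLt {M : ℕ} (hM : M ≠ 0) :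
    (n : ℝ)⁻¹ * ∑ i, cutoff (2 * M) (s i) ≤ proportionLt s (1 / M) := by
  rw [proportionLt, div_eq_inv_mul, ← Finset.sum_boole]
  gcongr with i
  exact cutoff.two_mul_le_indicator_lt hM (s i)

end proportionLt

theorem tendsto_limsup_proportionLt (s : (n : ℕ) → Fin n → ℝ) (hs : ∀ n i, 0 ≤ s n i)
    {I : ℕ → ℝ} {L : ℝ} (hI : Tendsto I atTop (𝓝 L))
    (havg : ∀ M ≠ 0, Tendsto (fun n : ℕ ↦ (n : ℝ)⁻¹ * ∑ i, cutoff M (s n i)) atTop (𝓝 (I M))) :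
    Tendsto (fun M : ℕ ↦ limsup (fun n ↦ proportionLt (s n) (1 / M)) atTop) atTop (𝓝 L) := by
  have hI₂ : Tendsto (fun M ↦ I (2 * M)) atTop (𝓝 L) :=
    hI.comp (tendsto_id.const_mul_atTop' two_pos)
  refine tendsto_of_tendsto_of_tendsto_of_le_of_le' hI₂ hI ?_ ?_ <;>
    filter_upwards [eventually_ne_atTop 0] with M hM
  · exact le_limsup_of_le_of_tendsto (isBoundedUnder_of ⟨1, fun n ↦ proportionLt_le_one _ _⟩)
      (fun n ↦ average_cutoff_two_mul_le_proportionLt (s n) hM) (havg _ (by positivity))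
  · exact limsup_le_of_le_of_tendsto (isBoundedUnder_of ⟨0, fun n ↦ proportionLt_nonneg _ _⟩)
      (fun n ↦ proportionLt_le_average_cutoff (s n) (hs n) M) (havg M hM)

theorem sparsely_vanishing_iff_symbol_sparsely_vanishing_general
    (k : ℕ) (D : Set (Fin k → ℝ))
    (hD0 : 0 < volume D) (hDfin : volume D < ⊤)
    (f : (Fin k → ℝ) → ℂ) (hf : Measurable f)
    (A : (n : ℕ) → Matrix (Fin n) (Fin n) ℂ)
    (hdistr : ∀ F : ℝ → ℂ, Continuous F → HasCompactSupport F →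
      Tendsto (fun n : ℕ => (n : ℂ)⁻¹ * ∑ j, F (singularValues (A n) j)) atTop
        (nhds (((volume D).toReal : ℂ)⁻¹ * ∫ x in D, F ‖f x‖))) :
    Tendsto (fun M : ℕ =>
        limsup (fun n : ℕ =>
          ((Finset.univ.filter fun i : Fin n =>
            singularValues (A n) i < 1 / (M : ℝ)).card : ℝ) / n) atTop)
      atTop (nhds 0)
    ↔ volume {x ∈ D | f x = 0} = 0 := by
  have hc : 0 < (volume D).toReal := ENNReal.toReal_pos hD0.ne' hDfin.ne
  have : IsFiniteMeasure (volume.restrict D) := isFiniteMeasure_restrict.2 hDfin.ne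
  have havg : ∀ M ≠ 0, Tendsto (fun n : ℕ ↦ (n : ℝ)⁻¹ * ∑ j, cutoff M (singularValues (A n) j))
      atTop (𝓝 ((volume D).toReal⁻¹ * ∫ x in D, cutoff M ‖f x‖)) := fun M hM ↦ by
    have h := hdistr (fun x ↦ (cutoff M x : ℂ)) (by fun_prop)
      ((cutoff.hasCompactSupport hM).comp_left Complex.ofReal_zero)
    rw [← tendsto_ofReal_iff]
    push_cast
    rwa [integral_complex_ofReal] at h
  have hlim := tendsto_limsup_proportionLt (fun n ↦ singularValues (A n))
    (fun n i ↦ Real.sqrt_nonneg _)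
    ((tendsto_integral_cutoff _ hf.norm).const_mul _) havg
  have hlim_eq_zero : (volume D).toReal⁻¹ * (volume.restrict D).real ((‖f ·‖) ⁻¹' {0}) = 0 ↔
      volume {x ∈ D | f x = 0} = 0 := by
    rw [mul_eq_zero, inv_eq_zero, or_iff_right hc.ne', measureReal_eq_zero_iff,
      Measure.restrict_apply_eq_zero (hf.norm (measurableSet_singleton 0))]
    simp only [preimage, mem_singleton_iff, norm_eq_zero, inter_comm]
    rfl
  exact ⟨fun h ↦ hlim_eq_zero.1 (tendsto_nhds_unique hlim h), fun h ↦ hlim_eq_zero.2 h ▸ hlim⟩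

/-- If `{A n}ₙ` has asymptotic singular value distribution described
by a measurable `f : D ⊂ ℝᵏ → ℂ` (with `0 < μ(D) < ∞`), then `{A n}ₙ` is sparsely
vanishing if and only if `f` is sparsely vanishing (its zero set is Lebesgue-null). -/
theorem sparsely_vanishing_iff_symbol_sparsely_vanishing
    (k : ℕ) (D : Set (Fin k → ℝ)) (hD : MeasurableSet D)
    (hD0 : 0 < volume D) (hDfin : volume D < ⊤)
    (f : (Fin k → ℝ) → ℂ) (hf : Measurable f)
    (A : (n : ℕ) → Matrix (Fin n) (Fin n) ℂ)
    (hdistr : ∀ F : ℝ → ℂ, Continuous F → HasCompactSupport F →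
      Tendsto (fun n : ℕ => (n : ℂ)⁻¹ * ∑ j, F (singularValues (A n) j)) atTop
        (nhds (((volume D).toReal : ℂ)⁻¹ * ∫ x in D, F ‖f x‖))) :
    Tendsto (fun M : ℕ =>
        limsup (fun n : ℕ =>
          ((Finset.univ.filter fun i : Fin n =>
            singularValues (A n) i < 1 / (M : ℝ)).card : ℝ) / n) atTop)
      atTop (nhds 0)
    ↔ volume {x ∈ D | f x = 0} = 0 :=
  sparsely_vanishing_iff_symbol_sparsely_vanishing_general k D hD0 hDfin f hf A hdistr
end

section
/- Let {A_n}_n be a sequence of n×n complex matrices with real spectra and f : D ⊂ ℝ^k → ℝ a measurable function on a set D with 0 < μ_k(D) < ∞. Assume {A_n}_n has asymptotic eigenvalue distribution described by f, i.e. for every continuous compactly supported F: ℂ → ℂ, lim_{n→∞}(1/n)∑_{j=1}^n F(λ_j(A_n)) = (1/μ_k(D))∫_D F(f(x))dx. Then {A_n}_n is sparsely vanishing in the sense of the eigenvalues (meaning lim_{M→∞} limsup_{n→∞} (1/n)·#{i ∈ {1,…,n} : |λ_i(A_n)| < 1/M} = 0) if and only if f is sparsely vanishing (the Lebesgue measure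 of {x ∈ D : f(x) = 0} is zero). -/
/-!
The fraction of eigenvalues of modulus `< ε` is squeezed between spectral averages of bump
functions: if `φ ≤ 1` is supported in the ball of radius `ε` and equals `1` near `0`, the
distribution hypothesis turns its eigenvalue average into `μ(D)⁻¹ ∫_D φ ∘ f ≥ μ(D)⁻¹ μ{f = 0}`;
if `φ ≥ 0` equals `1` on the ball of radius `ε` and is supported in radius `2ε`, the limit is
`≤ μ(D)⁻¹ μ{|f| < 2ε}`. As `ε → 0` these bounds meet, so the limsup fractions converge to
`μ(D)⁻¹ μ{x ∈ D | f x = 0}`, which vanishes exactly when the zero set is null.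
-/

open MeasureTheory Filter Matrix Metric Set Topology

theorem Multiset.natCast_card_filter {α : Type*} (s : Multiset α) (p : α → Prop)
    [DecidablePred p] :
    ((s.filter p).card : ℝ) = (s.map ({x | p x}.indicator 1)).sum := by
  induction s using Multiset.induction_on with
  | empty => simp
  | cons a s ih => by_cases h : p a <;> simp [h, ih, add_comm]

section LimsupCardFilter

variable {α : Type*} {s : ℕ → Multiset α} {p : α → Prop} [DecidablePred p] {G : α → ℝ} {L : ℝ}

theorem limsup_card_filter_div_le (hG : {x | p x}.indicator 1 ≤ G)
    (hlim : Tendsto (fun n : ℕ => (n : ℝ)⁻¹ * ((s n).map G).sum) atTop (𝓝 L)) :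
    limsup (fun n : ℕ => (((s n).filter p).card : ℝ) / n) atTop ≤ L := by
  rw [← hlim.limsup_eq]
  refine limsup_le_limsup (Eventually.of_forall fun n => ?_)
    (isCoboundedUnder_le_of_le _ fun n => by positivity) hlim.isBoundedUnder_le
  dsimp only
  rw [div_eq_inv_mul, Multiset.natCast_card_filter]
  gcongr
  exact Multiset.sum_map_le_sum_map _ _ fun x _ => hG x

theorem le_limsup_card_filter_div (hcard : ∀ n, Multiset.card (s n) ≤ n)
    (hG : G ≤ {x | p x}.indicator 1)
    (hlim : Tendsto (fun n : ℕ => (n : ℝ)⁻¹ * ((s n).map G).sum) atTop (𝓝 L)) :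
    L ≤ limsup (fun n : ℕ => (((s n).filter p).card : ℝ) / n) atTop := by
  rw [← hlim.limsup_eq]
  refine limsup_le_limsup (Eventually.of_forall fun n => ?_)
    hlim.isBoundedUnder_ge.isCoboundedUnder_le (isBoundedUnder_of ⟨1, fun n => ?_⟩)
  · dsimp only
    rw [div_eq_inv_mul, Multiset.natCast_card_filter]
    gcongr
    exact Multiset.sum_map_le_sum_map _ _ fun x _ => hG x
  · refine div_le_one_of_le₀ ?_ n.cast_nonneg
    exact_mod_cast (Multiset.card_le_card (Multiset.filter_le p _)).trans (hcard n)

end LimsupCardFilter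

theorem tendsto_measureReal_preimage_ball {α E : Type*} [MeasurableSpace α] {μ : Measure α}
    [IsFiniteMeasure μ] [MetricSpace E] [MeasurableSpace E] [OpensMeasurableSpace E]
    {g : α → E} (hg : Measurable g) (y : E) :
    Tendsto (fun ε => μ.real (g ⁻¹' ball y ε)) (𝓝[>] 0) (𝓝 (μ.real (g ⁻¹' {y}))) := by
  have hμ : Tendsto (fun ε => μ (g ⁻¹' ball y ε)) (𝓝[>] 0) (𝓝 (μ (g ⁻¹' {y}))) := by
    have := tendsto_measure_biInter_gt (μ := μ) (s := fun ε => g ⁻¹' ball y ε) (a := 0)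
      (fun _ _ => (measurableSet_ball.preimage hg).nullMeasurableSet)
      (fun _ _ _ hij => preimage_mono (ball_subset_ball hij)) ⟨1, one_pos, measure_ne_top _ _⟩
    rwa [← preimage_iInter₂, biInter_gt_ball, closedBall_zero] at this
  exact (ENNReal.tendsto_toReal (measure_ne_top _ _)).comp hμ

namespace ContDiffBump

variable {E : Type*} [NormedAddCommGroup E] [NormedSpace ℝ E] [HasContDiffBump E] {c : E}
  (φ : ContDiffBump c)

theorem indicator_closedBall_le : (closedBall c φ.rIn).indicator 1 ≤ ⇑φ := fun x => by
  by_cases hx : x ∈ closedBall c φ.rIn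
  · simp [hx, φ.one_of_mem_closedBall hx]
  · simp [hx, φ.nonneg]

theorem le_indicator_ball : ⇑φ ≤ (ball c φ.rOut).indicator 1 := fun x => by
  by_cases hx : x ∈ ball c φ.rOut
  · simp [hx, φ.le_one]
  · rw [← φ.support_eq, Function.notMem_support] at hx
    simp [hx, ← φ.support_eq]

variable [MeasurableSpace E] [OpensMeasurableSpace E] {α : Type*} [MeasurableSpace α]
  {μ : Measure α} [IsFiniteMeasure μ] {g : α → E}

theorem integrable_comp (hg : Measurable g) : Integrable (fun x => φ (g x)) μ :=
  Integrable.of_bound (φ.continuous.measurable.comp hg).aestronglyMeasurable 1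
    (ae_of_all _ fun x => by simpa [abs_of_nonneg φ.nonneg] using φ.le_one)

theorem measureReal_preimage_closedBall_le_integral (hg : Measurable g) :
    μ.real (g ⁻¹' closedBall c φ.rIn) ≤ ∫ x, φ (g x) ∂μ := by
  rw [← integral_indicator_one (measurableSet_closedBall.preimage hg)]
  exact integral_mono ((integrable_const 1).indicator (measurableSet_closedBall.preimage hg))
    (φ.integrable_comp hg) fun x => φ.indicator_closedBall_le (g x)

theorem integral_le_measureReal_preimage_ball (hg : Measurable g) :
    ∫ x, φ (g x) ∂μ ≤ μ.real (g ⁻¹' ball c φ.rOut) := by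
  rw [← integral_indicator_one (measurableSet_ball.preimage hg)]
  exact integral_mono (φ.integrable_comp hg)
    ((integrable_const 1).indicator (measurableSet_ball.preimage hg))
    fun x => φ.le_indicator_ball (g x)

end ContDiffBump

section SmallNormFraction

variable {E : Type*} [NormedAddCommGroup E] [NormedSpace ℝ E] [HasContDiffBump E]
  [MeasurableSpace E] [OpensMeasurableSpace E] {α : Type*} [MeasurableSpace α]
  {μ : Measure α} [IsFiniteMeasure μ] {g : α → E} {s : ℕ → Multiset E} {C : ℝ}

theorem mul_measureReal_preimage_zero_le_limsup (hC : 0 ≤ C) (hg : Measurable g)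
    (hcard : ∀ n, Multiset.card (s n) ≤ n)
    (hlim : ∀ φ : ContDiffBump (0 : E), Tendsto (fun n : ℕ => (n : ℝ)⁻¹ * ((s n).map φ).sum)
      atTop (𝓝 (C * ∫ x, φ (g x) ∂μ)))
    {ε : ℝ} (hε : 0 < ε) :
    C * μ.real (g ⁻¹' {0}) ≤
      limsup (fun n : ℕ => (((s n).filter fun z => ‖z‖ < ε).card : ℝ) / n) atTop := by
  let φ : ContDiffBump (0 : E) := ⟨ε / 2, ε, half_pos hε, half_lt_self hε⟩
  calc C * μ.real (g ⁻¹' {0})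
      ≤ C * μ.real (g ⁻¹' closedBall 0 φ.rIn) := by
        refine mul_le_mul_of_nonneg_left (measureReal_mono (preimage_mono ?_)) hC
        exact singleton_subset_iff.2 (mem_closedBall_self φ.rIn_pos.le)
    _ ≤ C * ∫ x, φ (g x) ∂μ := by
        gcongr
        exact φ.measureReal_preimage_closedBall_le_integral hg
    _ ≤ _ := by
        refine le_limsup_card_filter_div hcard ?_ (hlim φ)
        rw [← ball_zero_eq]
        exact φ.le_indicator_ball

theorem limsup_le_mul_measureReal_preimage_ball (hC : 0 ≤ C) (hg : Measurable g)
    (hlim : ∀ φ : ContDiffBump (0 : E), Tendsto (fun n : ℕ => (n : ℝ)⁻¹ * ((s n).map φ).sum)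
      atTop (𝓝 (C * ∫ x, φ (g x) ∂μ)))
    {ε : ℝ} (hε : 0 < ε) :
    limsup (fun n : ℕ => (((s n).filter fun z => ‖z‖ < ε).card : ℝ) / n) atTop ≤
      C * μ.real (g ⁻¹' ball 0 (2 * ε)) := by
  let φ : ContDiffBump (0 : E) := ⟨ε, 2 * ε, hε, by linarith⟩
  calc _ ≤ C * ∫ x, φ (g x) ∂μ := by
        refine limsup_card_filter_div_le ?_ (hlim φ)
        rw [← ball_zero_eq]
        exact (indicator_le_indicator_of_subset ball_subset_closedBall fun _ => zero_le_one).trans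
          φ.indicator_closedBall_le
    _ ≤ C * μ.real (g ⁻¹' ball 0 (2 * ε)) := by
        gcongr
        exact φ.integral_le_measureReal_preimage_ball hg

theorem tendsto_limsup_card_filter_norm_lt (hC : 0 ≤ C) (hg : Measurable g)
    (hcard : ∀ n, Multiset.card (s n) ≤ n)
    (hlim : ∀ φ : ContDiffBump (0 : E), Tendsto (fun n : ℕ => (n : ℝ)⁻¹ * ((s n).map φ).sum)
      atTop (𝓝 (C * ∫ x, φ (g x) ∂μ))) :
    Tendsto (fun M : ℕ =>
        limsup (fun n : ℕ => (((s n).filter fun z => ‖z‖ < 1 / (M : ℝ)).card : ℝ) / n) atTop)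
      atTop (𝓝 (C * μ.real (g ⁻¹' {0}))) := by
  have hradius : Tendsto (fun M : ℕ => 2 * (1 / (M : ℝ))) atTop (𝓝[>] 0) := by
    refine tendsto_nhdsWithin_iff.2 ⟨?_, (eventually_gt_atTop 0).mono fun M hM => ?_⟩
    · simpa using (tendsto_const_div_atTop_nhds_zero_nat (1 : ℝ)).const_mul 2
    · exact mem_Ioi.2 (by positivity)
  refine tendsto_of_tendsto_of_tendsto_of_le_of_le' tendsto_const_nhds
    (((tendsto_measureReal_preimage_ball hg 0).comp hradius).const_mul C) ?_ ?_ <;>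
    filter_upwards [eventually_gt_atTop 0] with M hM
  · exact mul_measureReal_preimage_zero_le_limsup hC hg hcard hlim (by positivity)
  · exact limsup_le_mul_measureReal_preimage_ball hC hg hlim (by positivity)

end SmallNormFraction

theorem tendsto_inv_mul_sum_map_of_complex {α : Type*} [MeasurableSpace α] {μ : Measure α}
    {g : α → ℂ} {s : ℕ → Multiset ℂ} {c : ℝ}
    (h : ∀ F : ℂ → ℂ, Continuous F → HasCompactSupport F →
      Tendsto (fun n : ℕ => (n : ℂ)⁻¹ * ((s n).map F).sum) atTop
        (𝓝 ((c : ℂ)⁻¹ * ∫ x, F (g x) ∂μ)))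
    {G : ℂ → ℝ} (hG : Continuous G) (hGc : HasCompactSupport G) :
    Tendsto (fun n : ℕ => (n : ℝ)⁻¹ * ((s n).map G).sum) atTop
      (𝓝 (c⁻¹ * ∫ x, G (g x) ∂μ)) := by
  rw [← tendsto_ofReal_iff]
  convert h (fun z => (G z : ℂ)) (Complex.continuous_ofReal.comp hG)
    (hGc.comp_left Complex.ofReal_zero) using 2 with n
  · push_cast
    rw [← Complex.ofRealHom_eq_coe, map_multiset_sum, Multiset.map_map]
    rfl
  · push_cast
    exact congrArg _ integral_ofReal.symm

theorem sparsely_vanishing_eigenvalues_iff_symbol_sparsely_vanishing_general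
    (k : ℕ) (D : Set (Fin k → ℝ))
    (hDfin : volume D < ⊤)
    (f : (Fin k → ℝ) → ℝ) (hf : Measurable f)
    (A : (n : ℕ) → Matrix (Fin n) (Fin n) ℂ)
    (hdistr : ∀ F : ℂ → ℂ, Continuous F → HasCompactSupport F →
      Tendsto (fun n : ℕ => (n : ℂ)⁻¹ * (((A n).charpoly.roots).map F).sum) atTop
        (nhds (((volume D).toReal : ℂ)⁻¹ * ∫ x in D, F ((f x : ℂ))))) :
    Tendsto (fun M : ℕ =>
        limsup (fun n : ℕ =>
          ((((A n).charpoly.roots).filter fun z => ‖z‖ < 1 / (M : ℝ)).card : ℝ) / n)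
        atTop)
      atTop (nhds 0)
    ↔ volume {x ∈ D | f x = 0} = 0 := by
  have : IsFiniteMeasure (volume.restrict D) := ⟨by rwa [Measure.restrict_apply_univ]⟩
  have hg : Measurable fun x => (f x : ℂ) := Complex.measurable_ofReal.comp hf
  have hcard (n : ℕ) : Multiset.card (A n).charpoly.roots ≤ n := by
    simpa [charpoly_natDegree_eq_dim] using Polynomial.card_roots' (A n).charpoly
  have key := tendsto_limsup_card_filter_norm_lt (inv_nonneg.2 ENNReal.toReal_nonneg) hg hcard
    fun φ => tendsto_inv_mul_sum_map_of_complex hdistr φ.continuous φ.hasCompactSupport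
  have hzero : volume {x ∈ D | f x = 0} = volume.restrict D ((fun x => (f x : ℂ)) ⁻¹' {0}) := by
    rw [Measure.restrict_apply ((measurableSet_singleton 0).preimage hg)]
    congr 1
    ext
    simp [and_comm]
  rw [hzero]
  refine ⟨fun h => ?_, fun h => by simpa [measureReal_def, h] using key⟩
  rcases mul_eq_zero.1 (tendsto_nhds_unique key h) with hD | hZ
  · have hD0 : volume D = 0 :=
      ((ENNReal.toReal_eq_zero_iff _).1 (inv_eq_zero.1 hD)).resolve_right hDfin.ne
    simp [Measure.restrict_eq_zero.2 hD0]
  · exact (measureReal_eq_zero_iff (measure_ne_top _ _)).1 hZ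

/-- If `{A n}ₙ` (matrices with real spectra) has asymptotic eigenvalue
distribution described by a measurable real-valued `f : D ⊂ ℝᵏ → ℝ` (with
`0 < μ(D) < ∞`), then `{A n}ₙ` is sparsely vanishing in the sense of the eigenvalues
if and only if `f` is sparsely vanishing. The eigenvalues, counted with multiplicity,
are the roots of the characteristic polynomial. -/
theorem sparsely_vanishing_eigenvalues_iff_symbol_sparsely_vanishing
    (k : ℕ) (D : Set (Fin k → ℝ)) (hD : MeasurableSet D)
    (hD0 : 0 < volume D) (hDfin : volume D < ⊤)
    (f : (Fin k → ℝ) → ℝ) (hf : Measurable f)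
    (A : (n : ℕ) → Matrix (Fin n) (Fin n) ℂ)
    (hreal : ∀ n, ∀ z ∈ (A n).charpoly.roots, z.im = 0)
    (hdistr : ∀ F : ℂ → ℂ, Continuous F → HasCompactSupport F →
      Tendsto (fun n : ℕ => (n : ℂ)⁻¹ * (((A n).charpoly.roots).map F).sum) atTop
        (nhds (((volume D).toReal : ℂ)⁻¹ * ∫ x in D, F ((f x : ℂ))))) :
    Tendsto (fun M : ℕ =>
        limsup (fun n : ℕ =>
          ((((A n).charpoly.roots).filter fun z => ‖z‖ < 1 / (M : ℝ)).card : ℝ) / n)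
        atTop)
      atTop (nhds 0)
    ↔ volume {x ∈ D | f x = 0} = 0 :=
  sparsely_vanishing_eigenvalues_iff_symbol_sparsely_vanishing_general k D hDfin f hf A hdistr
end
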